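/- arXiv:2412.19004 — 3 statements merged into one kernel-verified Lean document; each statement's English description precedes it below -/
import Mathlib

section
/- Let H be a real Hilbert space, C : H →L[ℝ] H a compact positive self-adjoint operator with orthonormal eigenbasis (ζᵢ) and eigenvalues λᵢ ≥ 0, and let α > 0. Then for any x ∈ H, the unique minimizer of y ↦ ‖C^{1/2} y - x‖² + α ‖y‖² is y* = ∑ᵢ (√λᵢ / (λᵢ + α)) ⟨ζᵢ, x⟩ ζᵢ. -/
/-!
For `J z = ‖S z - x‖ ^ 2 + α * ‖z‖ ^ 2`, a point `y` satisfying the first-order condition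
`⟪S y - x, S w⟫ + α * ⟪y, w⟫ = 0` for all `w` gives `J z = J y + ‖S (z - y)‖ ^ 2 + α * ‖z - y‖ ^ 2`,
so it is the unique minimizer when `α > 0`. Since `S` is diagonal in `ζ` with entries
`dᵢ = √λᵢ`, the condition reduces coefficientwise to `(dᵢ ^ 2 + α) cᵢ = dᵢ ⟪ζᵢ, x⟫`, solved by
`cᵢ = √λᵢ / (λᵢ + α) ⟪ζᵢ, x⟫`. Convergence of all series comes from `|dᵢ| = ‖S ζᵢ‖ ≤ ‖S‖`
and Bessel's inequality.
-/

open scoped RealInnerProductSpace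

section Tikhonov

variable {E F : Type*} [NormedAddCommGroup E] [InnerProductSpace ℝ E]
  [NormedAddCommGroup F] [InnerProductSpace ℝ F] {T : E →ₗ[ℝ] F} {α : ℝ} {x : F} {y : E}

theorem tikhonov_eq_add_of_forall_inner (hy : ∀ w, ⟪T y - x, T w⟫ + α * ⟪y, w⟫ = 0) (z : E) :
    ‖T z - x‖ ^ 2 + α * ‖z‖ ^ 2 =
      ‖T y - x‖ ^ 2 + α * ‖y‖ ^ 2 + (‖T (z - y)‖ ^ 2 + α * ‖z - y‖ ^ 2) := by
  have hTz : T z - x = (T y - x) + T (z - y) := by rw [map_sub]; abel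
  have hz : z = y + (z - y) := by abel
  have hcross := hy (z - y)
  rw [hTz, norm_add_sq_real, hz, norm_add_sq_real, add_sub_cancel_left]
  linear_combination 2 * hcross

theorem tikhonov_le_of_forall_inner (hα : 0 ≤ α) (hy : ∀ w, ⟪T y - x, T w⟫ + α * ⟪y, w⟫ = 0)
    (z : E) : ‖T y - x‖ ^ 2 + α * ‖y‖ ^ 2 ≤ ‖T z - x‖ ^ 2 + α * ‖z‖ ^ 2 := by
  rw [tikhonov_eq_add_of_forall_inner hy z]
  have : 0 ≤ ‖T (z - y)‖ ^ 2 + α * ‖z - y‖ ^ 2 := by positivity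
  linarith

theorem eq_of_tikhonov_le_of_forall_inner (hα : 0 < α)
    (hy : ∀ w, ⟪T y - x, T w⟫ + α * ⟪y, w⟫ = 0) {z : E}
    (hz : ‖T z - x‖ ^ 2 + α * ‖z‖ ^ 2 ≤ ‖T y - x‖ ^ 2 + α * ‖y‖ ^ 2) : z = y := by
  rw [tikhonov_eq_add_of_forall_inner hy z] at hz
  have : ‖z - y‖ ^ 2 ≤ 0 := by nlinarith [sq_nonneg ‖T (z - y)‖]
  simpa [sub_eq_zero] using this

end Tikhonov

section Orthonormal

variable {ι H : Type*} [NormedAddCommGroup H] [InnerProductSpace ℝ H] {ζ : ι → H}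

theorem Orthonormal.hasSum_tsum_smul [CompleteSpace H] (hζ : Orthonormal ℝ ζ) {c : ι → ℝ}
    (hc : Summable fun i => c i ^ 2) : HasSum (fun i => c i • ζ i) (∑' i, c i • ζ i) := by
  have := (hζ.orthogonalFamily.summable_iff_norm_sq_summable c).mpr (by simpa using hc)
  simpa using this.hasSum

theorem Orthonormal.summable_mul_inner_sq (hζ : Orthonormal ℝ ζ) {d : ι → ℝ} {M : ℝ}
    (hd : ∀ i, |d i| ≤ M) (a : H) : Summable fun i => (d i * ⟪ζ i, a⟫) ^ 2 := by
  refine .of_nonneg_of_le (fun i => sq_nonneg _) (fun i => ?_)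
    ((hζ.inner_products_summable a).mul_left (M ^ 2))
  rw [mul_pow, Real.norm_eq_abs, sq_abs, ← sq_abs (d i)]
  gcongr
  exact hd i

theorem HasSum.inner_smul_left {c : ι → ℝ} {v : H} (hv : HasSum (fun i => c i • ζ i) v)
    (a : H) : HasSum (fun i => c i * ⟪ζ i, a⟫) ⟪v, a⟫ := by
  simpa [real_inner_comm a, real_inner_smul_right] using (innerSL ℝ a).hasSum hv

theorem Orthonormal.inner_eq_of_hasSum (hζ : Orthonormal ℝ ζ) {c : ι → ℝ} {v : H}
    (hv : HasSum (fun i => c i • ζ i) v) (j : ι) : ⟪ζ j, v⟫ = c j := by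
  have hsingle := hasSum_single (f := fun i => c i * ⟪ζ i, ζ j⟫) j fun i hi => by simp [hζ.2 hi]
  rw [real_inner_comm]
  refine (hv.inner_smul_left (ζ j)).unique ?_
  simpa [real_inner_self_eq_norm_sq, hζ.1 j] using hsingle

end Orthonormal

section Diagonal

variable {ι H : Type*} [NormedAddCommGroup H] [InnerProductSpace ℝ H] {ζ : ι → H}
  {S : H →L[ℝ] H} {d : ι → ℝ}

theorem Orthonormal.apply_eq_smul_of_forall_eq_tsum (hζ : Orthonormal ℝ ζ)
    (hS : ∀ y, S y = ∑' i, (d i * ⟪ζ i, y⟫) • ζ i) (j : ι) : S (ζ j) = d j • ζ j := by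
  rw [hS, tsum_eq_single j fun i hi => by simp [hζ.2 hi], real_inner_self_eq_norm_sq, hζ.1 j,
    one_pow, mul_one]

theorem Orthonormal.abs_le_opNorm_of_forall_eq_tsum (hζ : Orthonormal ℝ ζ)
    (hS : ∀ y, S y = ∑' i, (d i * ⟪ζ i, y⟫) • ζ i) (j : ι) : |d j| ≤ ‖S‖ := by
  simpa [hζ.apply_eq_smul_of_forall_eq_tsum hS j, norm_smul, hζ.1 j] using S.le_opNorm (ζ j)

theorem Orthonormal.hasSum_of_forall_eq_tsum [CompleteSpace H] (hζ : Orthonormal ℝ ζ)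
    (hS : ∀ y, S y = ∑' i, (d i * ⟪ζ i, y⟫) • ζ i) (y : H) :
    HasSum (fun i => (d i * ⟪ζ i, y⟫) • ζ i) (S y) :=
  hS y ▸ hζ.hasSum_tsum_smul (hζ.summable_mul_inner_sq (hζ.abs_le_opNorm_of_forall_eq_tsum hS) y)

theorem Orthonormal.tikhonov_optimality_of_forall_eq_tsum [CompleteSpace H]
    (hζ : Orthonormal ℝ ζ) (hS : ∀ y, S y = ∑' i, (d i * ⟪ζ i, y⟫) • ζ i) {α : ℝ} (hα : 0 < α)
    (x w : H) :
    let y := ∑' i, (d i / (d i ^ 2 + α) * ⟪ζ i, x⟫) • ζ i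
    ⟪S y - x, S w⟫ + α * ⟪y, w⟫ = 0 := by
  intro y
  have hden : ∀ i, 0 < d i ^ 2 + α := fun i => by positivity
  have hbound : ∀ i, |d i / (d i ^ 2 + α)| ≤ ‖S‖ / α := fun i => by
    rw [abs_div, abs_of_pos (hden i)]
    calc |d i| / (d i ^ 2 + α) ≤ |d i| / α := by gcongr; nlinarith [sq_nonneg (d i)]
      _ ≤ ‖S‖ / α := by gcongr; exact hζ.abs_le_opNorm_of_forall_eq_tsum hS i
  have hy := hζ.hasSum_tsum_smul (hζ.summable_mul_inner_sq hbound x)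
  have hSy : ∀ i, ⟪ζ i, S y - x⟫ = d i * (d i / (d i ^ 2 + α) * ⟪ζ i, x⟫) - ⟪ζ i, x⟫ := by
    intro i
    rw [inner_sub_right, hζ.inner_eq_of_hasSum (hζ.hasSum_of_forall_eq_tsum hS y),
      hζ.inner_eq_of_hasSum hy]
  have hsum := ((hζ.hasSum_of_forall_eq_tsum hS w).inner_smul_left (S y - x)).add
    ((hy.inner_smul_left w).mul_left α)
  rw [real_inner_comm]
  refine hsum.unique ?_
  convert hasSum_zero with i
  rw [hSy]
  field_simp [(hden i).ne']
  ring

end Diagonal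

theorem alpha_standardization_explicit_form_general
    {H : Type*} [NormedAddCommGroup H] [InnerProductSpace ℝ H] [CompleteSpace H]
    (S : H →L[ℝ] H)
    (ζ : ℕ → H) (lam : ℕ → ℝ)
    (hon : Orthonormal ℝ ζ)
    (hnn : ∀ i, 0 ≤ lam i)
    (hS : ∀ y : H, S y = ∑' i, (Real.sqrt (lam i) * ⟪ζ i, y⟫) • ζ i)
    (α : ℝ) (hα : 0 < α) (x : H) :
    (∀ z : H,
        ‖S (∑' i, (Real.sqrt (lam i) / (lam i + α) * ⟪ζ i, x⟫) • ζ i) - x‖ ^ 2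
          + α * ‖∑' i, (Real.sqrt (lam i) / (lam i + α) * ⟪ζ i, x⟫) • ζ i‖ ^ 2
        ≤ ‖S z - x‖ ^ 2 + α * ‖z‖ ^ 2) ∧
    (∀ y : H, (∀ z : H, ‖S y - x‖ ^ 2 + α * ‖y‖ ^ 2 ≤ ‖S z - x‖ ^ 2 + α * ‖z‖ ^ 2) →
      y = ∑' i, (Real.sqrt (lam i) / (lam i + α) * ⟪ζ i, x⟫) • ζ i) := by
  have hlam : ∀ i, lam i = Real.sqrt (lam i) ^ 2 := fun i => (Real.sq_sqrt (hnn i)).symm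
  have hopt := hon.tikhonov_optimality_of_forall_eq_tsum (d := fun i => Real.sqrt (lam i)) hS hα x
  simp only [← hlam] at hopt
  exact ⟨tikhonov_le_of_forall_inner (T := (S : H →ₗ[ℝ] H)) hα.le hopt,
    fun y hy => eq_of_tikhonov_le_of_forall_inner (T := (S : H →ₗ[ℝ] H)) hα hopt (hy _)⟩

/-- Corollary 1: explicit form of the α-standardization.  For a compact positive
self-adjoint operator `C` with orthonormal eigenbasis `ζ` and eigenvalues `λᵢ ≥ 0`,
and `C^{1/2}` defined spectrally, the unique minimizer of
`y ↦ ‖C^{1/2} y - x‖² + α ‖y‖²` is `y* = ∑ᵢ (√λᵢ/(λᵢ+α)) ⟨ζᵢ, x⟩ ζᵢ`. -/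
theorem alpha_standardization_explicit_form
    {H : Type*} [NormedAddCommGroup H] [InnerProductSpace ℝ H] [CompleteSpace H]
    (C S : H →L[ℝ] H) (hCcompact : IsCompactOperator C)
    (hCpos : C.IsPositive) (hCsa : IsSelfAdjoint C)
    (ζ : ℕ → H) (lam : ℕ → ℝ)
    (hon : Orthonormal ℝ ζ)
    (hbasis : (Submodule.span ℝ (Set.range ζ)).topologicalClosure = ⊤)
    (heig : ∀ i, C (ζ i) = lam i • ζ i) (hnn : ∀ i, 0 ≤ lam i)
    (hS : ∀ y : H, S y = ∑' i, (Real.sqrt (lam i) * ⟪ζ i, y⟫) • ζ i)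
    (α : ℝ) (hα : 0 < α) (x : H) :
    (∀ z : H,
        ‖S (∑' i, (Real.sqrt (lam i) / (lam i + α) * ⟪ζ i, x⟫) • ζ i) - x‖ ^ 2
          + α * ‖∑' i, (Real.sqrt (lam i) / (lam i + α) * ⟪ζ i, x⟫) • ζ i‖ ^ 2
        ≤ ‖S z - x‖ ^ 2 + α * ‖z‖ ^ 2) ∧
    (∀ y : H, (∀ z : H, ‖S y - x‖ ^ 2 + α * ‖y‖ ^ 2 ≤ ‖S z - x‖ ^ 2 + α * ‖z‖ ^ 2) →
      y = ∑' i, (Real.sqrt (lam i) / (lam i + α) * ⟪ζ i, x⟫) • ζ i) :=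
  alpha_standardization_explicit_form_general S ζ lam hon hnn hS α hα x
end

section
/- Let H be a real Hilbert space, C : H →L[ℝ] H a compact positive self-adjoint operator with orthonormal eigenbasis (ζᵢ)_{i≥1} and nonincreasing eigenvalues λᵢ > 0 satisfying λ_k > λ_{k+1}, and let W be the orthogonal projection onto the closed complement of span{ζ₁,…,ζ_k}. Then for α > 0 and x ∈ H, the unique minimizer of y ↦ ‖C^{1/2} y - x‖² + α ‖W y‖² is y* = ∑_{i=1}^{k} λᵢ^{-1/2} ⟨x, ζᵢ⟩ ζᵢ + ∑_{i>k} (√λᵢ / (λᵢ + α)) ⟨x, ζᵢ⟩ ζᵢ. -/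
/-!
In the eigenbasis `ζ` both `S` and `W` are diagonal, so with `yᵢ = ⟪ζ i, y⟫` the objective is
`∑ᵢ (√λᵢ yᵢ - xᵢ)² + α wᵢ yᵢ²`, where `wᵢ = 0` for `i < k` and `wᵢ = 1` otherwise. Completing the
square in each coordinate writes its excess over the value at `y*` as `∑ᵢ (λᵢ + α wᵢ) (yᵢ - y*ᵢ)²`.
All weights are positive, which gives minimality, and uniqueness follows from Parseval.
-/

open scoped RealInnerProductSpace

theorem sq_sub_add_mul_sq_eq (a β c t : ℝ) (hd : a ^ 2 + β ≠ 0) :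
    (a * t - c) ^ 2 + β * t ^ 2 =
      (a * (a * c / (a ^ 2 + β)) - c) ^ 2 + β * (a * c / (a ^ 2 + β)) ^ 2
        + (a ^ 2 + β) * (t - a * c / (a ^ 2 + β)) ^ 2 := by
  field_simp
  ring

theorem Orthonormal.inner_right_sum_eq_ite {ι 𝕜 E : Type*} [RCLike 𝕜] [NormedAddCommGroup E]
    [InnerProductSpace 𝕜 E] [DecidableEq ι] {v : ι → E} (hv : Orthonormal 𝕜 v) (l : ι → 𝕜)
    (s : Finset ι) (i : ι) :
    inner 𝕜 (v i) (∑ j ∈ s, l j • v j) = if i ∈ s then l i else 0 := by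
  simp [inner_sum, inner_smul_right, orthonormal_iff_ite.mp hv]

namespace HilbertBasis

section RCLike

variable {ι 𝕜 H : Type*} [RCLike 𝕜] [NormedAddCommGroup H] [InnerProductSpace 𝕜 H]

theorem inner_tsum_mul_inner_smul (b : HilbertBasis ι 𝕜 H) {g : ι → 𝕜} {M : ℝ}
    (hg : ∀ i, ‖g i‖ ≤ M) (y : H) (j : ι) :
    inner 𝕜 (b j) (∑' i, (g i * inner 𝕜 (b i) y) • b i) = g j * inner 𝕜 (b j) y := by
  have hmem : Memℓp (fun i => g i * b.repr y i) 2 :=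
    ((b.repr y).2.const_mul (M : 𝕜)).mono' fun i => by
      rw [norm_mul, norm_mul, RCLike.norm_ofReal]
      exact mul_le_mul_of_nonneg_right ((hg i).trans (le_abs_self M)) (norm_nonneg _)
  have hsum := b.hasSum_repr_symm ⟨_, hmem⟩
  simp only [b.repr_apply_apply] at hsum
  rw [hsum.tsum_eq, ← b.repr_apply_apply, LinearIsometryEquiv.apply_symm_apply]

theorem eq_zero_of_forall_inner_eq_zero (b : HilbertBasis ι 𝕜 H) {v : H}
    (hv : ∀ i, inner 𝕜 (b i) v = 0) : v = 0 :=
  b.repr.map_eq_zero_iff.mp (lp.ext (funext fun i => (b.repr_apply_apply v i).trans (hv i)))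

end RCLike

variable {ι H : Type*} [NormedAddCommGroup H] [InnerProductSpace ℝ H]

theorem hasSum_inner_sq (b : HilbertBasis ι ℝ H) (u : H) :
    HasSum (fun i => ⟪b i, u⟫ ^ 2) (‖u‖ ^ 2) := by
  simpa only [real_inner_comm u, ← sq, real_inner_self_eq_norm_sq] using
    b.hasSum_inner_mul_inner u u

theorem unique_minimizer_of_hasSum_excess (b : HilbertBasis ι ℝ H) {F : H → ℝ} {d : ι → ℝ}
    (hd : ∀ i, 0 < d i) {ystar : H}
    (hF : ∀ y, HasSum (fun i => d i * ⟪b i, y - ystar⟫ ^ 2) (F y - F ystar)) :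
    (∀ z, F ystar ≤ F z) ∧ ∀ y, (∀ z, F y ≤ F z) → y = ystar := by
  have hterm (y : H) (i : ι) : 0 ≤ d i * ⟪b i, y - ystar⟫ ^ 2 := by
    have := hd i
    positivity
  refine ⟨fun z => sub_nonneg.mp ((hF z).nonneg (hterm z)), fun y hy => ?_⟩
  have hexcess : F y - F ystar = 0 :=
    le_antisymm (by linarith [hy ystar]) ((hF y).nonneg (hterm y))
  have hzero := (hasSum_zero_iff_of_nonneg (hterm y)).mp (hexcess ▸ hF y)
  refine sub_eq_zero.mp (b.eq_zero_of_forall_inner_eq_zero fun i => ?_)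
  simpa [(hd i).ne'] using congrFun hzero i

theorem unique_minimizer_tikhonov (b : HilbertBasis ι ℝ H) {A B : H → H} {a w : ι → ℝ}
    {α : ℝ} (hA : ∀ y i, ⟪b i, A y⟫ = a i * ⟪b i, y⟫) (hB : ∀ y i, ⟪b i, B y⟫ = w i * ⟪b i, y⟫)
    (hpos : ∀ i, 0 < a i ^ 2 + α * w i ^ 2) (x : H) {ystar : H}
    (hstar : ∀ i, ⟪b i, ystar⟫ = a i * ⟪b i, x⟫ / (a i ^ 2 + α * w i ^ 2)) :
    (∀ z, ‖A ystar - x‖ ^ 2 + α * ‖B ystar‖ ^ 2 ≤ ‖A z - x‖ ^ 2 + α * ‖B z‖ ^ 2) ∧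
      ∀ y, (∀ z, ‖A y - x‖ ^ 2 + α * ‖B y‖ ^ 2 ≤ ‖A z - x‖ ^ 2 + α * ‖B z‖ ^ 2) →
        y = ystar := by
  have hF (y : H) : HasSum (fun i => (a i * ⟪b i, y⟫ - ⟪b i, x⟫) ^ 2 + α * w i ^ 2 * ⟪b i, y⟫ ^ 2)
      (‖A y - x‖ ^ 2 + α * ‖B y‖ ^ 2) := by
    refine ((b.hasSum_inner_sq (A y - x)).add ((b.hasSum_inner_sq (B y)).mul_left α)).congr_fun
      fun i => ?_
    rw [inner_sub_right, hA, hB]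
    ring
  refine b.unique_minimizer_of_hasSum_excess (F := fun y => ‖A y - x‖ ^ 2 + α * ‖B y‖ ^ 2) hpos
    fun y => ((hF y).sub (hF ystar)).congr_fun fun i => ?_
  rw [inner_sub_right, hstar, sq_sub_add_mul_sq_eq _ _ _ ⟪b i, y⟫ (hpos i).ne']
  ring

end HilbertBasis

noncomputable def standardizationFilter (lam : ℕ → ℝ) (k : ℕ) (α : ℝ) (i : ℕ) : ℝ :=
  if i < k then (√(lam i))⁻¹ else √(lam i) / (lam i + α)

theorem standardizationFilter_eq {lam : ℕ → ℝ} {i : ℕ} (hi : 0 < lam i) (k : ℕ) (α : ℝ) :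
    standardizationFilter lam k α i =
      √(lam i) / (√(lam i) ^ 2 + α * (if i < k then 0 else 1) ^ 2) := by
  unfold standardizationFilter
  split_ifs
  · rw [zero_pow two_ne_zero, mul_zero, add_zero]
    field_simp
  · rw [one_pow, mul_one, Real.sq_sqrt hi.le]

theorem abs_standardizationFilter_le {lam : ℕ → ℝ} (hpos : ∀ i, 0 < lam i)
    (hmono : Antitone lam) (k : ℕ) {α : ℝ} (hα : 0 < α) (i : ℕ) :
    |standardizationFilter lam k α i| ≤ (√(lam k))⁻¹ + √(lam 0) / α := by
  have hi := hpos i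
  have hk : 0 ≤ (√(lam k))⁻¹ := by positivity
  have h0 : 0 ≤ √(lam 0) / α := by positivity
  unfold standardizationFilter
  split_ifs with hik
  · rw [abs_of_pos (by positivity)]
    have : (√(lam i))⁻¹ ≤ (√(lam k))⁻¹ :=
      inv_anti₀ (Real.sqrt_pos.mpr (hpos k)) (Real.sqrt_le_sqrt (hmono hik.le))
    linarith
  · rw [abs_of_nonneg (by positivity)]
    have : √(lam i) / (lam i + α) ≤ √(lam 0) / α :=
      div_le_div₀ (Real.sqrt_nonneg _) (Real.sqrt_le_sqrt (hmono (Nat.zero_le i))) hα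
        (by linarith)
    linarith

theorem regularized_standardization_projector_explicit_general
    {H : Type*} [NormedAddCommGroup H] [InnerProductSpace ℝ H] [CompleteSpace H]
    (S W : H →L[ℝ] H)
    (ζ : ℕ → H) (lam : ℕ → ℝ) (k : ℕ)
    (hon : Orthonormal ℝ ζ)
    (hbasis : (Submodule.span ℝ (Set.range ζ)).topologicalClosure = ⊤)
    (hpos : ∀ i, 0 < lam i) (hmono : Antitone lam)
    (hS : ∀ y : H, S y = ∑' i, (Real.sqrt (lam i) * ⟪ζ i, y⟫) • ζ i)
    (hW : ∀ y : H, W y = y - ∑ i ∈ Finset.range k, ⟪ζ i, y⟫ • ζ i)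
    (α : ℝ) (hα : 0 < α) (x : H) :
    letI ystar : H := ∑' i, ((if i < k then (Real.sqrt (lam i))⁻¹
        else Real.sqrt (lam i) / (lam i + α)) * ⟪x, ζ i⟫) • ζ i
    (∀ z : H, ‖S ystar - x‖ ^ 2 + α * ‖W ystar‖ ^ 2
        ≤ ‖S z - x‖ ^ 2 + α * ‖W z‖ ^ 2) ∧
    (∀ y : H, (∀ z : H, ‖S y - x‖ ^ 2 + α * ‖W y‖ ^ 2
        ≤ ‖S z - x‖ ^ 2 + α * ‖W z‖ ^ 2) → y = ystar) := by
  obtain ⟨b, rfl⟩ : ∃ b : HilbertBasis ℕ ℝ H, ⇑b = ζ := ⟨_, HilbertBasis.coe_mk hon hbasis.ge⟩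
  have hS_coord (y : H) (i : ℕ) : ⟪b i, S y⟫ = √(lam i) * ⟪b i, y⟫ := by
    rw [hS]
    refine b.inner_tsum_mul_inner_smul (M := √(lam 0)) (fun j => ?_) y i
    rw [Real.norm_of_nonneg (Real.sqrt_nonneg _)]
    exact Real.sqrt_le_sqrt (hmono (Nat.zero_le j))
  have hW_coord (y : H) (i : ℕ) : ⟪b i, W y⟫ = (if i < k then 0 else 1) * ⟪b i, y⟫ := by
    rw [hW, inner_sub_right, b.orthonormal.inner_right_sum_eq_ite]
    simp only [Finset.mem_range]
    split_ifs <;> ring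
  refine b.unique_minimizer_tikhonov hS_coord hW_coord (fun i => ?_) x (fun i => ?_)
  · have := hpos i
    split_ifs <;> positivity
  · simp only [real_inner_comm _ x]
    refine (b.inner_tsum_mul_inner_smul (g := standardizationFilter lam k α)
      (abs_standardizationFilter_le hpos hmono k hα) x i).trans ?_
    rw [standardizationFilter_eq (hpos i)]
    ring

/-- Proposition 3 (explicit solution): with `W` the orthogonal projection onto the
complement of the span of the first `k` eigenfunctions, the unique minimizer of
`y ↦ ‖C^{1/2} y - x‖² + α ‖W y‖²` whitens the first `k` components fully and
Tikhonov-regularizes the rest. -/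
theorem regularized_standardization_projector_explicit
    {H : Type*} [NormedAddCommGroup H] [InnerProductSpace ℝ H] [CompleteSpace H]
    (C S W : H →L[ℝ] H) (hCcompact : IsCompactOperator C)
    (hCpos : C.IsPositive) (hCsa : IsSelfAdjoint C)
    (ζ : ℕ → H) (lam : ℕ → ℝ) (k : ℕ)
    (hon : Orthonormal ℝ ζ)
    (hbasis : (Submodule.span ℝ (Set.range ζ)).topologicalClosure = ⊤)
    (heig : ∀ i, C (ζ i) = lam i • ζ i)
    (hpos : ∀ i, 0 < lam i) (hmono : Antitone lam)
    (hgap : lam (k + 1) < lam k)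
    (hS : ∀ y : H, S y = ∑' i, (Real.sqrt (lam i) * ⟪ζ i, y⟫) • ζ i)
    (hW : ∀ y : H, W y = y - ∑ i ∈ Finset.range k, ⟪ζ i, y⟫ • ζ i)
    (α : ℝ) (hα : 0 < α) (x : H) :
    letI ystar : H := ∑' i, ((if i < k then (Real.sqrt (lam i))⁻¹
        else Real.sqrt (lam i) / (lam i + α)) * ⟪x, ζ i⟫) • ζ i
    (∀ z : H, ‖S ystar - x‖ ^ 2 + α * ‖W ystar‖ ^ 2
        ≤ ‖S z - x‖ ^ 2 + α * ‖W z‖ ^ 2) ∧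
    (∀ y : H, (∀ z : H, ‖S y - x‖ ^ 2 + α * ‖W y‖ ^ 2
        ≤ ‖S z - x‖ ^ 2 + α * ‖W z‖ ^ 2) → y = ystar) :=
  regularized_standardization_projector_explicit_general S W ζ lam k hon hbasis hpos hmono hS hW α
    hα x
end

section
/- Let H be a real Hilbert space, C a compact positive self-adjoint operator on H with eigenpairs (λᵢ, ζᵢ), λ_k > λ_{k+1} > 0, W the orthogonal projection onto the complement of span{ζ₁,…,ζ_k}, and α > 0. For x ∈ H let x_st^{α,k} denote the minimizer of y ↦ ‖C^{1/2}y - x‖² + α‖W y‖². Then ‖x_st^{α,k}‖² = ∑_{i=1}^{k} λᵢ^{-1} ⟨x, ζᵢ⟩² + ∑_{i>k} (λᵢ / (λᵢ + α)²) ⟨x, ζᵢ⟩². -/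
/-!
In the eigenbasis `ζ`, both `S = C^{1/2}` and `W` are diagonal, with weights `√λᵢ` and
`𝟙[i ≥ k]`. The first variation of the Tikhonov functional at the minimizer, tested against
`ζᵢ`, decouples into the scalar equations `(λᵢ + α 𝟙[i ≥ k]) ⟨x_st, ζᵢ⟩ = √λᵢ ⟨x, ζᵢ⟩`,
and Parseval's identity turns these into the formula for `‖x_st‖²`.
-/

open scoped RealInnerProductSpace

theorem inner_sub_add_inner_eq_zero_of_forall_le
    {E F G : Type*} [AddCommGroup E] [Module ℝ E]
    [NormedAddCommGroup F] [InnerProductSpace ℝ F] [NormedAddCommGroup G] [InnerProductSpace ℝ G]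
    (A : E →ₗ[ℝ] F) (B : E →ₗ[ℝ] G) (α : ℝ) (x : F) (x₀ : E)
    (hmin : ∀ z, ‖A x₀ - x‖ ^ 2 + α * ‖B x₀‖ ^ 2 ≤ ‖A z - x‖ ^ 2 + α * ‖B z‖ ^ 2) (h : E) :
    ⟪A x₀ - x, A h⟫ + α * ⟪B x₀, B h⟫ = 0 := by
  set a := ⟪A x₀ - x, A h⟫ + α * ⟪B x₀, B h⟫
  -- Along `x₀ + t • h` the functional exceeds its minimum by `2 a t + b t²`, which stays
  -- nonnegative for all `t` only if `a = 0`.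
  have hquad : ∀ t : ℝ, 0 ≤ (‖A h‖ ^ 2 + α * ‖B h‖ ^ 2) * (t * t) + (2 * a) * t + 0 := by
    intro t
    have := hmin (x₀ + t • h)
    rw [map_add, map_add, map_smul, map_smul, add_sub_right_comm, norm_add_sq_real,
      norm_add_sq_real, inner_smul_right, inner_smul_right, norm_smul, norm_smul,
      Real.norm_eq_abs, mul_pow, mul_pow, sq_abs] at this
    linear_combination this
  have := discrim_le_zero hquad
  rw [discrim] at this
  nlinarith [sq_nonneg a]

theorem HilbertBasis.inner_apply_of_apply_eq_smul {𝕜 E ι : Type*} [RCLike 𝕜]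
    [NormedAddCommGroup E] [InnerProductSpace 𝕜 E]
    (b : HilbertBasis ι 𝕜 E) (T : E →L[𝕜] E) (μ : ι → 𝕜) (hT : ∀ i, T (b i) = μ i • b i)
    (j : ι) (y : E) : inner 𝕜 (b j) (T y) = μ j * inner 𝕜 (b j) y := by
  classical
  have hsum := (b.hasSum_repr y).mapL (innerSL 𝕜 (b j) ∘L T)
  simp only [ContinuousLinearMap.comp_apply, innerSL_apply_apply, map_smul, hT,
    orthonormal_iff_ite.mp b.orthonormal, b.repr_apply_apply] at hsum
  rw [hsum.unique (hasSum_single j fun i hi => by simp [Ne.symm hi])]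
  simp [mul_comm]

theorem HilbertBasis.norm_sq_eq_tsum_inner_sq {ι H : Type*} [NormedAddCommGroup H]
    [InnerProductSpace ℝ H] (b : HilbertBasis ι ℝ H) (y : H) :
    ‖y‖ ^ 2 = ∑' i, ⟪b i, y⟫ ^ 2 := by
  rw [← real_inner_self_eq_norm_sq, ← b.tsum_inner_mul_inner]
  simp only [real_inner_comm y, sq]

section DiagonalTikhonov

variable {ι H : Type*} [NormedAddCommGroup H] [InnerProductSpace ℝ H] (b : HilbertBasis ι ℝ H)
  {A B : H →L[ℝ] H} {s w : ι → ℝ} (hA : ∀ i, A (b i) = s i • b i)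
  (hB : ∀ i, B (b i) = w i • b i) {α : ℝ} {x x₀ : H}
  (hmin : ∀ z, ‖A x₀ - x‖ ^ 2 + α * ‖B x₀‖ ^ 2 ≤ ‖A z - x‖ ^ 2 + α * ‖B z‖ ^ 2)
include hA hB hmin

theorem HilbertBasis.mul_inner_minimizer_eq (j : ι) :
    (s j ^ 2 + α * w j ^ 2) * ⟪b j, x₀⟫ = s j * ⟪b j, x⟫ := by
  have h := inner_sub_add_inner_eq_zero_of_forall_le (A : H →ₗ[ℝ] H) (B : H →ₗ[ℝ] H) α x x₀
    hmin (b j)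
  simp only [ContinuousLinearMap.coe_coe, hA, hB, inner_smul_right, real_inner_comm (b j),
    inner_sub_right, b.inner_apply_of_apply_eq_smul A s hA,
    b.inner_apply_of_apply_eq_smul B w hB] at h
  linear_combination h

theorem HilbertBasis.norm_sq_minimizer_eq_tsum (hne : ∀ i, s i ^ 2 + α * w i ^ 2 ≠ 0) :
    ‖x₀‖ ^ 2 = ∑' i, (s i / (s i ^ 2 + α * w i ^ 2)) ^ 2 * ⟪x, b i⟫ ^ 2 := by
  rw [b.norm_sq_eq_tsum_inner_sq]
  refine tsum_congr fun i => ?_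
  rw [eq_div_of_mul_eq (hne i) ((mul_comm _ _).trans (b.mul_inner_minimizer_eq hA hB hmin i)),
    real_inner_comm]
  ring

end DiagonalTikhonov

theorem rdmd_norm_sq_formula_general
    {H : Type*} [NormedAddCommGroup H] [InnerProductSpace ℝ H] [CompleteSpace H]
    (S W : H →L[ℝ] H)
    (ζ : ℕ → H) (lam : ℕ → ℝ) (k : ℕ)
    (hon : Orthonormal ℝ ζ)
    (hbasis : (Submodule.span ℝ (Set.range ζ)).topologicalClosure = ⊤)
    (hpos : ∀ i, 0 < lam i)
    (hS : ∀ y : H, S y = ∑' i, (Real.sqrt (lam i) * ⟪ζ i, y⟫) • ζ i)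
    (hW : ∀ y : H, W y = y - ∑ i ∈ Finset.range k, ⟪ζ i, y⟫ • ζ i)
    (α : ℝ) (hα : 0 < α) (x : H) (xst : H)
    (hmin : ∀ z : H, ‖S xst - x‖ ^ 2 + α * ‖W xst‖ ^ 2
        ≤ ‖S z - x‖ ^ 2 + α * ‖W z‖ ^ 2) :
    ‖xst‖ ^ 2 = ∑' i, (if i < k then (lam i)⁻¹ else lam i / (lam i + α) ^ 2) * ⟪x, ζ i⟫ ^ 2 := by
  let b := HilbertBasis.mk hon hbasis.ge
  have hb : ⇑b = ζ := HilbertBasis.coe_mk hon hbasis.ge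
  have hSζ : ∀ i, S (b i) = Real.sqrt (lam i) • b i := by
    simp [hb, hS, orthonormal_iff_ite.mp hon]
  have hWζ : ∀ i, W (b i) = (if i < k then (0 : ℝ) else 1) • b i := by
    intro i
    simp only [hb, hW, orthonormal_iff_ite.mp hon]
    split_ifs <;> simp [*]
  have hne : ∀ i, √(lam i) ^ 2 + α * (if i < k then (0 : ℝ) else 1) ^ 2 ≠ 0 := by
    intro i
    have := hpos i
    split_ifs <;> simp <;> positivity
  rw [b.norm_sq_minimizer_eq_tsum hSζ hWζ hmin hne, hb]
  refine tsum_congr fun i => ?_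
  have hl := hpos i
  congr 1
  split_ifs
  · norm_num [div_pow, Real.sq_sqrt hl.le]
    field_simp
  · norm_num [div_pow, Real.sq_sqrt hl.le]

/-- The squared regularized Mahalanobis distance: if `x_st` minimizes
`y ↦ ‖C^{1/2} y - x‖² + α ‖W y‖²` (with `W` the projection onto the complement of
the first `k` eigenfunctions), then
`‖x_st‖² = ∑_{i<k} λᵢ⁻¹ ⟨x,ζᵢ⟩² + ∑_{i≥k} (λᵢ/(λᵢ+α)²) ⟨x,ζᵢ⟩²`. -/
theorem rdmd_norm_sq_formula
    {H : Type*} [NormedAddCommGroup H] [InnerProductSpace ℝ H] [CompleteSpace H]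
    (C S W : H →L[ℝ] H) (hCcompact : IsCompactOperator C)
    (hCpos : C.IsPositive) (hCsa : IsSelfAdjoint C)
    (ζ : ℕ → H) (lam : ℕ → ℝ) (k : ℕ)
    (hon : Orthonormal ℝ ζ)
    (hbasis : (Submodule.span ℝ (Set.range ζ)).topologicalClosure = ⊤)
    (heig : ∀ i, C (ζ i) = lam i • ζ i)
    (hpos : ∀ i, 0 < lam i) (hmono : Antitone lam)
    (hgap : lam (k + 1) < lam k)
    (hS : ∀ y : H, S y = ∑' i, (Real.sqrt (lam i) * ⟪ζ i, y⟫) • ζ i)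
    (hW : ∀ y : H, W y = y - ∑ i ∈ Finset.range k, ⟪ζ i, y⟫ • ζ i)
    (α : ℝ) (hα : 0 < α) (x : H) (xst : H)
    (hmin : ∀ z : H, ‖S xst - x‖ ^ 2 + α * ‖W xst‖ ^ 2
        ≤ ‖S z - x‖ ^ 2 + α * ‖W z‖ ^ 2) :
    ‖xst‖ ^ 2 = ∑' i, (if i < k then (lam i)⁻¹ else lam i / (lam i + α) ^ 2) * ⟪x, ζ i⟫ ^ 2 :=
  rdmd_norm_sq_formula_general S W ζ lam k hon hbasis hpos hS hW α hα x xst hmin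
end
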